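/- For a commutative ring R with identity, if I is an annihilating-ideal of R (i.e., Ann(I) ≠ (0)) and N is a nonzero nilpotent ideal of R, then N + I is an annihilating-ideal of R. -/

import Mathlib

/-! Since `Ann(N + I) = Ann N ∩ Ann I`, it suffices to find a nonzero element of `Ann I` killed
by `N`. The chain `Ann I ⊇ N • Ann I ⊇ N² • Ann I ⊇ ⋯` reaches `0`, and any nonzero element of
its last nonzero term is such an element. -/

namespace Submodule

variable {R M : Type*} [CommSemiring R] [AddCommMonoid M] [Module R M]

theorem exists_ne_zero_forall_smul_eq_zero_of_pow_smul_eq_bot {N : Ideal R} :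
    ∀ (n : ℕ) {P : Submodule R M}, P ≠ ⊥ → N ^ n • P = ⊥ →
      ∃ m ∈ P, m ≠ 0 ∧ ∀ r ∈ N, r • m = 0
  | 0, P, hP, hnP => absurd (by simpa using hnP) hP
  | n + 1, P, hP, hnP => by
    by_cases hNP : N • P = ⊥
    · obtain ⟨m, hmP, hm⟩ := P.ne_bot_iff.mp hP
      exact ⟨m, hmP, hm, fun r hr ↦ by simpa [hNP] using smul_mem_smul hr hmP⟩
    · rw [pow_succ, Submodule.mul_smul] at hnP
      obtain ⟨m, hmNP, hm, hNm⟩ :=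
        exists_ne_zero_forall_smul_eq_zero_of_pow_smul_eq_bot n hNP hnP
      exact ⟨m, smul_le_right hmNP, hm, hNm⟩

theorem exists_ne_zero_forall_smul_eq_zero_of_isNilpotent {N : Ideal R} (hN : IsNilpotent N)
    {P : Submodule R M} (hP : P ≠ ⊥) : ∃ m ∈ P, m ≠ 0 ∧ ∀ r ∈ N, r • m = 0 := by
  obtain ⟨n, hn⟩ := hN
  exact exists_ne_zero_forall_smul_eq_zero_of_pow_smul_eq_bot n hP (by simp [hn])

end Submodule

namespace Ideal

variable {R : Type*} [CommSemiring R]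

theorem inf_annihilator_ne_bot_of_isNilpotent {I N : Ideal R} (hI : I ≠ ⊥) (hN : IsNilpotent N) :
    I ⊓ N.annihilator ≠ ⊥ := by
  obtain ⟨m, hmI, hm, hNm⟩ := Submodule.exists_ne_zero_forall_smul_eq_zero_of_isNilpotent hN hI
  refine (Submodule.ne_bot_iff _).mpr ⟨m, ⟨hmI, Submodule.mem_annihilator.mpr fun r hr ↦ ?_⟩, hm⟩
  simpa [mul_comm] using hNm r hr

end Ideal

/-- If `I` is an annihilating-ideal of a commutative ring `R` and `N` is a nonzero
nilpotent ideal of `R`, then `N + I` is an annihilating-ideal of `R`. -/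
theorem annihilating_add_nilpotent {R : Type*} [CommRing R] (I N : Ideal R)
    (hI : Submodule.annihilator I ≠ ⊥) (hnil : IsNilpotent N) :
    Submodule.annihilator (N + I) ≠ ⊥ := by
  rw [Submodule.add_eq_sup, Submodule.annihilator_sup, inf_comm]
  exact Ideal.inf_annihilator_ne_bot_of_isNilpotent hI hnil
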